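/- Let K be a bounded non-negative self-adjoint operator on a complex Hilbert space H, let M be a closed subspace of H, N = M^⊥, and let T = P_M K|_M, Γ = P_N K|_M, S = P_N K|_N be the compressions of K. Then for every ε > 0 the operator K + εI_H is invertible on H, the compression Λ_{1,ε} = P_N (K + εI_H)^{-1}|_N is an invertible operator on N, and Γ (T + εI_M)^{-1} Γ* = S + εI_N − Λ_{1,ε}^{-1}. -/

import Mathlib

/-!
With `L = K + ε` and `A = T + ε`, both strictly positive and hence invertible, the
Schur complement `X = (S + ε) - Γ A⁻¹ Γ*` of `A` in `L` satisfies `L (n - A⁻¹ Γ* n) = X n` for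
`n ∈ N`. Applying `L⁻¹` and projecting onto `N` gives `Λ X = 1`. Moreover `Λ` is injective: if
`Λ n = 0` then `y = L⁻¹ n` lies in `M`, so `⟪L y, y⟫ = ⟪n, y⟫ = 0`, forcing `y = 0`. Hence
`Λ⁻¹ = X`, which is the claimed identity.
-/

open ContinuousLinearMap
open scoped InnerProduct InnerProductSpace

namespace ContinuousLinearMap

theorem mul_eq_one_comm_of_injective {R E : Type*} [Semiring R] [TopologicalSpace E]
    [AddCommMonoid E] [Module R E] {f g : E →L[R] E} (h : f * g = 1)
    (hf : Function.Injective f) : g * f = 1 := by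
  have hfg : Function.LeftInverse f g := fun x ↦ by
    rw [← mul_apply_eq_comp, h, one_apply_eq_self]
  ext x
  simpa [mul_apply_eq_comp] using hfg.rightInverse_of_injective hf x

section Positive

variable {H : Type*} [NormedAddCommGroup H] [InnerProductSpace ℂ H] {K : H →L[ℂ] H} {ε : ℝ}

theorem IsPositive.isUnit_add_smul_one [CompleteSpace H] (hK : K.IsPositive) (hε : 0 < ε) :
    IsUnit (K + (ε : ℂ) • 1) := by
  have hε1 : IsStrictlyPositive ((ε : ℂ) • (1 : H →L[ℂ] H)) := by
    rw [Complex.coe_smul]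
    exact isStrictlyPositive_one.smul hε
  exact (IsStrictlyPositive.nonneg_add ((nonneg_iff_isPositive K).mpr hK) hε1).isUnit

theorem IsPositive.eq_zero_of_inner_add_smul_one_self (hK : K.IsPositive) (hε : 0 < ε) {y : H}
    (hy : ⟪(K + (ε : ℂ) • 1) y, y⟫_ℂ = 0) : y = 0 := by
  have hre : RCLike.re ⟪K y, y⟫_ℂ + ε * ‖y‖ ^ 2 = 0 := by
    simpa [inner_add_left, inner_smul_left, inner_self_eq_norm_sq_to_K, ← Complex.ofReal_pow]
      using congrArg Complex.re hy
  have hy2 : ‖y‖ ^ 2 = 0 := by nlinarith [hK.re_inner_nonneg_left y, sq_nonneg ‖y‖]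
  simpa using hy2

end Positive

section Compression

variable {𝕜 H : Type*} [RCLike 𝕜] [NormedAddCommGroup H] [InnerProductSpace 𝕜 H]

noncomputable def compression (K : H →L[𝕜] H) (U V : Submodule 𝕜 H)
    [V.HasOrthogonalProjection] : U →L[𝕜] V :=
  V.orthogonalProjectionOnto ∘L K ∘L U.subtypeL

@[simp]
theorem compression_apply (K : H →L[𝕜] H) (U V : Submodule 𝕜 H) [V.HasOrthogonalProjection]
    (u : U) : compression K U V u = V.orthogonalProjectionOnto (K u) :=
  rfl

theorem coe_compression_add_coe_compression_orthogonal (K : H →L[𝕜] H) (U V : Submodule 𝕜 H)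
    [V.HasOrthogonalProjection] (u : U) :
    (compression K U V u : H) + compression K U Vᗮ u = K u := by
  rw [compression_apply, compression_apply, ← Submodule.starProjection_apply,
    ← Submodule.starProjection_apply]
  exact V.starProjection_add_starProjection_orthogonal (K u)

theorem adjoint_compression [CompleteSpace H] (K : H →L[𝕜] H) (U V : Submodule 𝕜 H)
    [CompleteSpace U] [CompleteSpace V] :
    (compression K U V)† = compression (K†) V U := by
  rw [compression, adjoint_comp, adjoint_comp, Submodule.adjoint_subtypeL,
    Submodule.adjoint_orthogonalProjectionOnto, comp_assoc, compression]

theorem compression_add_smul_one_self (K : H →L[𝕜] H) (U : Submodule 𝕜 H)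
    [U.HasOrthogonalProjection] (c : 𝕜) :
    compression (K + c • 1) U U = compression K U U + c • 1 := by
  ext u
  simp

theorem compression_add_smul_one_of_isOrtho (K : H →L[𝕜] H) {U V : Submodule 𝕜 H}
    [V.HasOrthogonalProjection] (hUV : U ⟂ V) (c : 𝕜) :
    compression (K + c • 1) U V = compression K U V := by
  ext u
  simp [(Submodule.starProjection_apply_eq_zero_iff (K := V)).mpr (hUV.le u.2)]

theorem injective_compression_ringInverse {L : H →L[𝕜] H} (hL : IsUnit L)
    (hL₀ : ∀ y, ⟪L y, y⟫_𝕜 = 0 → y = 0) (N : Submodule 𝕜 H) [N.HasOrthogonalProjection] :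
    Function.Injective (compression (Ring.inverse L) N N) := by
  rw [injective_iff_map_eq_zero]
  intro n hn
  set y := Ring.inverse L n
  have hLy : L y = n := by rw [← mul_apply_eq_comp, Ring.mul_inverse_cancel L hL, one_apply_eq_self]
  have hy : y ∈ Nᗮ := Submodule.orthogonalProjectionOnto_eq_zero_iff.mp hn
  have hy₀ : y = 0 := hL₀ y (by rw [hLy]; exact Submodule.inner_right_of_mem_orthogonal n.2 hy)
  rw [← Submodule.coe_eq_zero, ← hLy, hy₀, map_zero]

end Compression

section Schur

variable {𝕜 H : Type*} [RCLike 𝕜] [NormedAddCommGroup H] [InnerProductSpace 𝕜 H]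
  (L : H →L[𝕜] H) (M : Submodule 𝕜 H) [M.HasOrthogonalProjection]

noncomputable def schurComplement : Mᗮ →L[𝕜] Mᗮ :=
  compression L Mᗮ Mᗮ - compression L M Mᗮ ∘L Ring.inverse (compression L M M) ∘L compression L Mᗮ M

theorem apply_sub_ringInverse_compression (hA : IsUnit (compression L M M)) (n : Mᗮ) :
    L (n - Ring.inverse (compression L M M) (compression L Mᗮ M n)) = schurComplement L M n := by
  rw [schurComplement, sub_apply, comp_apply, comp_apply]
  set a := Ring.inverse (compression L M M) (compression L Mᗮ M n)
  have ha : compression L M M a = compression L Mᗮ M n := by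
    rw [← mul_apply_eq_comp, Ring.mul_inverse_cancel _ hA, one_apply_eq_self]
  have hLn := coe_compression_add_coe_compression_orthogonal L Mᗮ M n
  have hLa := coe_compression_add_coe_compression_orthogonal L M M a
  rw [ha] at hLa
  rw [Submodule.coe_sub, map_sub, ← hLn, ← hLa]
  abel

theorem compression_ringInverse_mul_schurComplement (hL : IsUnit L)
    (hA : IsUnit (compression L M M)) :
    compression (Ring.inverse L) Mᗮ Mᗮ * schurComplement L M = 1 := by
  ext n
  rw [mul_apply_eq_comp, compression_apply, ← apply_sub_ringInverse_compression L M hA n,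
    ← mul_apply_eq_comp, Ring.inverse_mul_cancel _ hL, one_apply_eq_self]
  simp

theorem schurComplement_add_smul_one (K : H →L[𝕜] H) (c : 𝕜) :
    schurComplement (K + c • 1) M = compression K Mᗮ Mᗮ + c • 1 -
      compression K M Mᗮ ∘L Ring.inverse (compression K M M + c • 1) ∘L compression K Mᗮ M := by
  rw [schurComplement, compression_add_smul_one_self, compression_add_smul_one_self,
    compression_add_smul_one_of_isOrtho _ M.isOrtho_orthogonal_right,
    compression_add_smul_one_of_isOrtho _ M.isOrtho_orthogonal_left]

end Schur

end ContinuousLinearMap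

/-- Let `K ≥ 0` be a bounded self-adjoint operator on `H`, `M` a closed
subspace, `N = Mᗮ`, with compressions `T = P_M K|_M`, `Γ = P_N K|_M`, `S = P_N K|_N`. Then for
every `ε > 0` the operator `K + εI` is invertible, the compression
`Λ_{1,ε} = P_N (K + εI)⁻¹|_N` is invertible on `N`, and
`Γ (T + εI_M)⁻¹ Γ* = S + εI_N − Λ_{1,ε}⁻¹`. -/
theorem stmt_5
    {H : Type*} [NormedAddCommGroup H] [InnerProductSpace ℂ H] [CompleteSpace H]
    (K : H →L[ℂ] H) (hK : K.IsPositive)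
    (M : Submodule ℂ H) [CompleteSpace M]
    (T : M →L[ℂ] M) (Γ : M →L[ℂ] Mᗮ) (S : Mᗮ →L[ℂ] Mᗮ)
    (hT : T = (Submodule.orthogonalProjection M).comp (K.comp M.subtypeL))
    (hΓ : Γ = (Submodule.orthogonalProjection Mᗮ).comp (K.comp M.subtypeL))
    (hS : S = (Submodule.orthogonalProjection Mᗮ).comp (K.comp Mᗮ.subtypeL)) :
    ∀ ε : ℝ, 0 < ε →
      IsUnit (K + (ε : ℂ) • (1 : H →L[ℂ] H)) ∧
      IsUnit ((Submodule.orthogonalProjection Mᗮ).comp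
        ((Ring.inverse (K + (ε : ℂ) • (1 : H →L[ℂ] H))).comp Mᗮ.subtypeL)) ∧
      Γ.comp ((Ring.inverse (T + (ε : ℂ) • (1 : M →L[ℂ] M))).comp
          (ContinuousLinearMap.adjoint Γ)) =
        S + (ε : ℂ) • (1 : Mᗮ →L[ℂ] Mᗮ) -
          Ring.inverse ((Submodule.orthogonalProjection Mᗮ).comp
            ((Ring.inverse (K + (ε : ℂ) • (1 : H →L[ℂ] H))).comp Mᗮ.subtypeL)) := by
  intro ε hε
  subst hT hΓ hS
  set L : H →L[ℂ] H := K + (ε : ℂ) • 1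
  have hL : IsUnit L := hK.isUnit_add_smul_one hε
  have hA : IsUnit (compression L M M) := by
    rw [compression_add_smul_one_self]
    exact (hK.orthogonalProjectionOnto_comp M).isUnit_add_smul_one hε
  have hΛX := compression_ringInverse_mul_schurComplement L M hL hA
  have hXΛ := mul_eq_one_comm_of_injective hΛX <| injective_compression_ringInverse hL
    (fun _ ↦ hK.eq_zero_of_inner_add_smul_one_self hε) Mᗮ
  let Λ : (Mᗮ →L[ℂ] Mᗮ)ˣ := ⟨_, _, hΛX, hXΛ⟩
  have hΛ_inv : Ring.inverse (compression (Ring.inverse L) Mᗮ Mᗮ) = schurComplement L M :=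
    Ring.inverse_unit Λ
  have hΓ_adj : (compression K M Mᗮ)† = compression K Mᗮ M := by
    rw [adjoint_compression, hK.isSelfAdjoint.adjoint_eq]
  refine ⟨hL, Λ.isUnit, ?_⟩
  change compression K M Mᗮ ∘L Ring.inverse (compression K M M + (ε : ℂ) • 1) ∘L
      (compression K M Mᗮ)† = compression K Mᗮ Mᗮ + (ε : ℂ) • 1 -
    Ring.inverse (compression (Ring.inverse L) Mᗮ Mᗮ)
  rw [hΛ_inv, schurComplement_add_smul_one, hΓ_adj, sub_sub_cancel]
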